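/- Let C = ℤ and let Energy : C^ω → ℕ ∪ {∞} be the valuation Energy(t₀t₁⋯) = sup_{k ≥ 0} Σ_{i=0}^{k−1} t_i (the supremum of all partial sums, including the empty sum 0), where ℕ ∪ {∞} carries its usual complete linear order. Let L be the C-graph with vertex set ℕ (usual order) and edges ℓ →t ℓ' if and only if t ≤ ℓ − ℓ' in ℤ. Then L is well-monotonic, and its completion L^⊤ is a completely well-monotonic C-graph which is (κ, Energy)-universal for every cardinal κ (uniformly Energy-universal). -/

import Mathlib

/-!
Common vocabulary: graphs as edge relations `E : V → C → V → Prop` (a `C`-graph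
additionally has no sinks), infinite paths and their colorations, valuations,
values of vertices, morphisms, universality, monotonic graphs, games,
strategies, positional strategies and positionality, neutral colors.
-/

universe u v w

section Prelim

variable {C : Type} {X : Type}

/-- A `C`-graph (as an edge relation) has no sinks. -/
def NoSinks {V : Type v} (E : V → C → V → Prop) : Prop :=
  ∀ a : V, ∃ (c : C) (b : V), E a c b

/-- `InfPath E a w` : there is an infinite path from `a` with coloration `w`. -/
def InfPath {V : Type v} (E : V → C → V → Prop) (a : V) (w : ℕ → C) : Prop :=
  ∃ ρ : ℕ → V, ρ 0 = a ∧ ∀ i, E (ρ i) (w i) (ρ (i + 1))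

/-- The value of a vertex in a graph: supremum of values of colorations of
infinite paths from it. -/
noncomputable def vval {V : Type v} [CompleteLinearOrder X]
    (val : (ℕ → C) → X) (E : V → C → V → Prop) (a : V) : X :=
  sSup (val '' {w | InfPath E a w})

/-- Morphisms of `C`-graphs. -/
def IsMorphism {V : Type v} {V' : Type w} (E : V → C → V → Prop)
    (E' : V' → C → V' → Prop) (φ : V → V') : Prop :=
  ∀ ⦃a : V⦄ ⦃c : C⦄ ⦃b : V⦄, E a c b → E' (φ a) c (φ b)

/-- `val`-preserving morphisms of `C`-graphs. -/
def ValPreserving {V : Type v} {V' : Type w} [CompleteLinearOrder X]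
    (val : (ℕ → C) → X) (E : V → C → V → Prop) (E' : V' → C → V' → Prop)
    (φ : V → V') : Prop :=
  IsMorphism E E' φ ∧ ∀ a : V, vval val E' (φ a) = vval val E a

/-- Left composition: `a ≥ b → (b →c d) → (a →c d)`. -/
def LeftComp {L : Type v} [LinearOrder L] (M : L → C → L → Prop) : Prop :=
  ∀ ⦃a b : L⦄ ⦃c : C⦄ ⦃d : L⦄, b ≤ a → M b c d → M a c d

/-- Right composition: `(a →c b) → b ≥ d → (a →c d)`. -/
def RightComp {L : Type v} [LinearOrder L] (M : L → C → L → Prop) : Prop :=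
  ∀ ⦃a : L⦄ ⦃c : C⦄ ⦃b d : L⦄, M a c b → d ≤ b → M a c d

/-- A monotonic graph over a linearly ordered vertex set. -/
def Monotonic {L : Type v} [LinearOrder L] (M : L → C → L → Prop) : Prop :=
  LeftComp M ∧ RightComp M

/-- Every vertex has a `c`-predecessor, for every color `c`. -/
def CompletePreds {L : Type v} (M : L → C → L → Prop) : Prop :=
  ∀ (c : C) (l : L), ∃ p : L, M p c l

/-- `CWM C L M` : `M` is a completely well-monotonic `C`-graph over `L`:
monotonic, without sinks, well-ordered, a complete lattice, and with all
`c`-predecessors. -/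
def CWM (C : Type) (L : Type v) [LinearOrder L] (M : L → C → L → Prop) : Prop :=
  Monotonic M ∧ NoSinks M ∧ WellFounded ((· < ·) : L → L → Prop) ∧
    (∀ A : Set L, ∃ a : L, IsLUB A a) ∧ CompletePreds M

/-- `(κ, val)`-universality: every `C`-graph with fewer than `κ` vertices has a
`val`-preserving morphism into `M`. -/
def Universal {L : Type v} [CompleteLinearOrder X] (val : (ℕ → C) → X)
    (κ : Cardinal.{u}) (M : L → C → L → Prop) : Prop :=
  ∀ (V : Type u) (E : V → C → V → Prop), NoSinks E → Cardinal.mk V < κ →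
    ∃ φ : V → L, ValPreserving val E M φ

/-! Histories: finite paths from `v₀`, stored as lists of steps `(c, x)`,
most recent step first. -/

/-- Last vertex of a history. -/
def lastV {V : Type v} (v₀ : V) : List (C × V) → V
  | [] => v₀
  | (_, x) :: _ => x

/-- Validity of a history with respect to the graph `E` and start vertex `v₀`. -/
def ValidPath {V : Type v} (E : V → C → V → Prop) (v₀ : V) : List (C × V) → Prop
  | [] => True
  | (c, x) :: rest => ValidPath E v₀ rest ∧ E (lastV v₀ rest) c x

/-- A strategy (for Eve) from `v₀` in the game `(E, VEve, val)` : a subgraph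
`(H, F)` of the unfolding of `E` from `v₀`, containing the empty history,
without sinks, and closed under all extensions at Adam vertices. -/
structure Strategy {V : Type v} (E : V → C → V → Prop) (VEve : Set V) (v₀ : V) where
  H : Set (List (C × V))
  F : List (C × V) → C → List (C × V) → Prop
  valid : ∀ π ∈ H, ValidPath E v₀ π
  nil_mem : [] ∈ H
  F_sub : ∀ ⦃π : List (C × V)⦄ ⦃c : C⦄ ⦃π' : List (C × V)⦄,
    F π c π' → π ∈ H ∧ π' ∈ H ∧ ∃ x : V, π' = (c, x) :: π
  no_sink : ∀ π ∈ H, ∃ (c : C) (π' : List (C × V)), F π c π'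
  adam_closed : ∀ π ∈ H, lastV v₀ π ∉ VEve →
    ∀ (c : C) (x : V), E (lastV v₀ π) c x → ((c, x) :: π) ∈ H ∧ F π c ((c, x) :: π)

/-- The value of a strategy: supremum of values of colorations of infinite
paths from the empty history in the strategy. -/
noncomputable def Strategy.value {V : Type v} [CompleteLinearOrder X]
    (val : (ℕ → C) → X) {E : V → C → V → Prop} {VEve : Set V} {v₀ : V}
    (S : Strategy E VEve v₀) : X :=
  sSup (val '' {w | ∃ ρ : ℕ → List (C × V), ρ 0 = [] ∧ ∀ i, S.F (ρ i) (w i) (ρ (i + 1))})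

/-- The value of a vertex in a game: infimum of values of strategies from it. -/
noncomputable def gameValue {V : Type v} [CompleteLinearOrder X] (val : (ℕ → C) → X)
    (E : V → C → V → Prop) (VEve : Set V) (v₀ : V) : X :=
  ⨅ S : Strategy E VEve v₀, S.value val

/-- A positional strategy: a subgraph of `E` over all vertices keeping all
outgoing edges of Adam vertices. -/
structure PosStrategy {V : Type v} (E : V → C → V → Prop) (VEve : Set V) where
  F : V → C → V → Prop
  sub : ∀ ⦃a : V⦄ ⦃c : C⦄ ⦃b : V⦄, F a c b → E a c b
  no_sink : NoSinks F
  adam_all : ∀ a : V, a ∉ VEve → ∀ (c : C) (b : V), E a c b → F a c b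

/-- The value of a positional strategy from a vertex. -/
noncomputable def PosStrategy.value {V : Type v} [CompleteLinearOrder X]
    (val : (ℕ → C) → X) {E : V → C → V → Prop} {VEve : Set V}
    (P : PosStrategy E VEve) (v₀ : V) : X :=
  vval val P.F v₀

/-- Optimality of a positional strategy. -/
def PosStrategy.Optimal {V : Type v} [CompleteLinearOrder X]
    (val : (ℕ → C) → X) {E : V → C → V → Prop} {VEve : Set V}
    (P : PosStrategy E VEve) : Prop :=
  ∀ v₀ : V, P.value val v₀ = gameValue val E VEve v₀

/-- A valuation is positional if every game with this valuation admits an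
optimal positional strategy. -/
def Positional [CompleteLinearOrder X] (val : (ℕ → C) → X) : Prop :=
  ∀ (V : Type u) (E : V → C → V → Prop), NoSinks E → ∀ VEve : Set V,
    ∃ P : PosStrategy E VEve, P.Optimal val

/-! Words and neutral colors. -/

/-- Concatenation of a finite word with an infinite word. -/
def wcat (u : List C) (w : ℕ → C) : ℕ → C := fun i =>
  if h : i < u.length then u.get ⟨i, h⟩ else w (i - u.length)

/-- `w'` is obtained from `w` by inserting finitely many `e`'s between
consecutive letters (and before the first letter):
`w' = e^{n₀} w₀ e^{n₁} w₁ ⋯`. -/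
def IsEpsInsertion (e : C) (w w' : ℕ → C) : Prop :=
  ∃ σ : ℕ → ℕ, StrictMono σ ∧ (∀ k, w' (σ k) = w k) ∧ ∀ i, i ∉ Set.range σ → w' i = e

/-- `e` is a neutral color for `val`. -/
def Neutral [CompleteLinearOrder X] (val : (ℕ → C) → X) (e : C) : Prop :=
  ∀ w w' : ℕ → C, IsEpsInsertion e w w' → val w' = val w

/-- `e` is eventually good for Eve. -/
def EvGoodForEve [CompleteLinearOrder X] (val : (ℕ → C) → X) (e : C) : Prop :=
  ∀ u : List C, val (wcat u fun _ => e) = ⨅ z : ℕ → C, val (wcat u z)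

/-- `e` is strongly neutral for `val`. -/
def StronglyNeutral [CompleteLinearOrder X] (val : (ℕ → C) → X) (e : C) : Prop :=
  Neutral val e ∧ EvGoodForEve val e

/-- Prefix-increasing valuations. -/
def PrefixIncreasing [CompleteLinearOrder X] (val : (ℕ → C) → X) : Prop :=
  ∀ (u : List C) (w : ℕ → C), val w ≤ val (wcat u w)

/-! Objectives. -/

/-- The valuation (into the two-element complete linear order `Prop`,
`⊥ = False`, `⊤ = True`) associated with an objective `W`: winning words have
value `⊥`. -/
def toVal (W : Set (ℕ → C)) : (ℕ → C) → Prop := fun w => w ∉ W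

/-- A vertex satisfies the objective `W` if every coloration of an infinite
path from it belongs to `W`. -/
def Sat {V : Type v} (W : Set (ℕ → C)) (E : V → C → V → Prop) (a : V) : Prop :=
  ∀ w : ℕ → C, InfPath E a w → w ∈ W

/-- Prefix-invariant objectives. -/
def PrefixInvariant (W : Set (ℕ → C)) : Prop :=
  ∀ (u : List C) (w : ℕ → C), wcat u w ∈ W ↔ w ∈ W

/-- The completion `L^⊤` of a monotonic graph: a new top vertex with all
outgoing edges is added. -/
def completionE {L : Type v} (M : L → C → L → Prop) :
    WithTop L → C → WithTop L → Prop := fun x c y =>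
  x = ⊤ ∨ ∃ a b : L, x = (a : WithTop L) ∧ y = (b : WithTop L) ∧ M a c b

/-- A graph has sufficiently many `e`-edges if `→e` is "well-founded" in the
sense that every nonempty set of vertices contains a vertex `a` with `b →e a`
for all `b` in the set. -/
def SuffEps {V : Type v} (E : V → C → V → Prop) (e : C) : Prop :=
  ∀ A : Set V, A.Nonempty → ∃ a ∈ A, ∀ b ∈ A, E b e a

end Prelim
/-- The energy valuation: supremum of the partial sums (including the empty
sum `0`), valued in `ℕ ∪ {∞}`. -/
noncomputable def EnergyVal (w : ℕ → ℤ) : ℕ∞ :=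
  ⨆ k : ℕ, (((∑ i ∈ Finset.range k, w i).toNat : ℕ) : ℕ∞)

/-- The monotonic `ℤ`-graph for energy: vertices `ℕ`, edges `ℓ →t ℓ'` iff
`t ≤ ℓ - ℓ'`. -/
def energyE : ℕ → ℤ → ℕ → Prop := fun l t l' => t ≤ (l : ℤ) - (l' : ℤ)

/-!
A graph with energy valuation maps into `L^⊤` by sending each vertex to its own value: along
an edge `v →t v'`, prepending `t` to the paths from `v'` shows `t + val(v') ≤ val(v)`, which is
exactly the edge relation of `L`. The morphism preserves values because in `L^⊤` the value
of `ℓ` is `ℓ` itself: a path from `ℓ` in `L` keeps `ℓ` minus its partial sums nonnegative,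
and the coloration `ℓ 0 0 ⋯` attains `ℓ`.
-/

section Graphs

variable {C : Type} {X : Type} {V : Type v}

@[simp] lemma wcat_singleton_zero (c : C) (w : ℕ → C) : wcat [c] w 0 = c := rfl

@[simp] lemma wcat_singleton_succ (c : C) (w : ℕ → C) (i : ℕ) : wcat [c] w (i + 1) = w i := by
  simp [wcat]

lemma InfPath.cons {E : V → C → V → Prop} {a b : V} {c : C} {w : ℕ → C}
    (hab : E a c b) (hw : InfPath E b w) : InfPath E a (wcat [c] w) := by
  obtain ⟨ρ, rfl, hρ⟩ := hw
  refine ⟨fun i => Nat.casesOn i a ρ, rfl, fun i => ?_⟩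
  cases i with
  | zero => exact hab
  | succ i => simpa using hρ i

lemma exists_infPath {E : V → C → V → Prop} (hE : NoSinks E) (a : V) :
    ∃ w, InfPath E a w := by
  choose c next hnext using hE
  let ρ : ℕ → V := fun n => next^[n] a
  exact ⟨fun i => c (ρ i), ρ, rfl, fun i => by
    simpa only [ρ, Function.iterate_succ_apply'] using hnext (ρ i)⟩

lemma le_vval [CompleteLinearOrder X] {val : (ℕ → C) → X} {E : V → C → V → Prop} {a : V}
    {w : ℕ → C} (hw : InfPath E a w) : val w ≤ vval val E a :=
  le_sSup ⟨w, hw, rfl⟩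

end Graphs

section Completion

variable {C : Type} {X : Type} {L : Type v} {M : L → C → L → Prop}

lemma completionE_coe_iff {a : L} {c : C} {y : WithTop L} :
    completionE M a c y ↔ ∃ b : L, y = b ∧ M a c b := by
  simp [completionE]

lemma monotonic_completionE [LinearOrder L] (hM : Monotonic M) : Monotonic (completionE M) := by
  constructor
  · rintro a b c d hba (rfl | ⟨p, q, rfl, rfl, hpq⟩)
    · exact Or.inl (top_le_iff.mp hba)
    · induction a using WithTop.recTopCoe with
      | top => exact Or.inl rfl
      | coe a => exact Or.inr ⟨a, q, rfl, rfl, hM.1 (WithTop.coe_le_coe.mp hba) hpq⟩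
  · rintro a c b d (rfl | ⟨p, q, rfl, rfl, hpq⟩) hdb
    · exact Or.inl rfl
    · obtain ⟨d, rfl, hdq⟩ := WithTop.le_coe_iff.mp hdb
      exact Or.inr ⟨p, d, rfl, rfl, hM.2 hpq hdq⟩

lemma noSinks_completionE [Inhabited C] (hM : NoSinks M) : NoSinks (completionE M) := by
  intro x
  induction x using WithTop.recTopCoe with
  | top => exact ⟨default, ⊤, Or.inl rfl⟩
  | coe a =>
    obtain ⟨c, b, hab⟩ := hM a
    exact ⟨c, b, Or.inr ⟨a, b, rfl, rfl, hab⟩⟩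

lemma completePreds_completionE : CompletePreds (completionE M) :=
  fun _ _ => ⟨⊤, Or.inl rfl⟩

/-- Over a well-order, a set of `WithTop L` with no upper bound in `L` has supremum `⊤`;
otherwise its supremum is the least upper bound in `L`. -/
lemma WithTop.exists_isLUB_of_wellFoundedLT [LinearOrder L] [WellFoundedLT L]
    (A : Set (WithTop L)) :
    ∃ a, IsLUB A a := by
  let U : Set L := {b | ∀ x ∈ A, x ≤ b}
  rcases U.eq_empty_or_nonempty with hU | hU
  · refine ⟨⊤, fun _ _ => le_top, fun u hu => ?_⟩
    induction u using WithTop.recTopCoe with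
    | top => exact le_rfl
    | coe b => exact absurd hu (Set.eq_empty_iff_forall_notMem.mp hU b)
  · let b₀ := wellFounded_lt.min U hU
    refine ⟨b₀, wellFounded_lt.min_mem U hU, fun u hu => ?_⟩
    induction u using WithTop.recTopCoe with
    | top => exact le_top
    | coe b => exact WithTop.coe_le_coe.mpr (not_lt.mp (wellFounded_lt.not_lt_min U hu))

lemma cwm_completionE [Inhabited C] [LinearOrder L] [WellFoundedLT L] (hM : Monotonic M)
    (hs : NoSinks M) :
    CWM C (WithTop L) (completionE M) :=
  ⟨monotonic_completionE hM, noSinks_completionE hs, wellFounded_lt,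
    WithTop.exists_isLUB_of_wellFoundedLT, completePreds_completionE⟩

lemma infPath_completionE_top (w : ℕ → C) : InfPath (completionE M) ⊤ w :=
  ⟨fun _ => ⊤, rfl, fun _ => Or.inl rfl⟩

lemma infPath_completionE_coe_iff {a : L} {w : ℕ → C} :
    InfPath (completionE M) a w ↔ InfPath M a w := by
  constructor
  · rintro ⟨ρ, hρ0, hρ⟩
    have hfin : ∀ i, ∃ b : L, ρ i = b := by
      intro i
      induction i with
      | zero => exact ⟨a, hρ0⟩
      | succ i ih =>
        obtain ⟨b, hb⟩ := ih
        obtain ⟨b', hb', -⟩ := completionE_coe_iff.mp (hb ▸ hρ i)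
        exact ⟨b', hb'⟩
    choose σ hσ using hfin
    refine ⟨σ, WithTop.coe_injective ((hσ 0).symm.trans hρ0), fun i => ?_⟩
    obtain ⟨b, hb, hσb⟩ := completionE_coe_iff.mp (hσ i ▸ hσ (i + 1) ▸ hρ i)
    rwa [WithTop.coe_injective hb]
  · rintro ⟨ρ, rfl, hρ⟩
    exact ⟨fun i => ρ i, rfl, fun i => Or.inr ⟨_, _, rfl, rfl, hρ i⟩⟩

lemma vval_completionE_coe [CompleteLinearOrder X] (val : (ℕ → C) → X) (a : L) :
    vval val (completionE M) a = vval val M a := by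
  simp only [vval, infPath_completionE_coe_iff]

end Completion

section Energy

lemma monotonic_energyE : Monotonic energyE :=
  ⟨fun _ _ _ _ hba h => by simp only [energyE] at *; omega,
    fun _ _ _ _ h hdb => by simp only [energyE] at *; omega⟩

lemma noSinks_energyE : NoSinks energyE :=
  fun a => ⟨0, a, by simp [energyE]⟩

lemma le_energyVal (w : ℕ → ℤ) (k : ℕ) :
    (((∑ i ∈ Finset.range k, w i).toNat : ℕ) : ℕ∞) ≤ EnergyVal w :=
  le_iSup (fun k => (((∑ i ∈ Finset.range k, w i).toNat : ℕ) : ℕ∞)) k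

lemma energyVal_le_coe_iff {w : ℕ → ℤ} {m : ℕ} :
    EnergyVal w ≤ m ↔ ∀ k, ∑ i ∈ Finset.range k, w i ≤ m := by
  simp only [EnergyVal, iSup_le_iff, Nat.cast_le]
  exact forall_congr' fun k => by omega

lemma energyVal_cons_le_coe_iff {t : ℤ} {w : ℕ → ℤ} {m : ℕ} :
    EnergyVal (wcat [t] w) ≤ m ↔ ∀ k, t + ∑ i ∈ Finset.range k, w i ≤ m := by
  have hsum : ∀ k, ∑ i ∈ Finset.range (k + 1), wcat [t] w i =
      t + ∑ i ∈ Finset.range k, w i := fun k => by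
    rw [Finset.sum_range_succ', add_comm]; simp
  rw [energyVal_le_coe_iff]
  refine ⟨fun h k => hsum k ▸ h (k + 1), fun h k => ?_⟩
  cases k with
  | zero => simp
  | succ k => exact hsum k ▸ h k

lemma energyVal_const_one : EnergyVal (fun _ => 1) = ⊤ :=
  ENat.eq_top_iff_forall_ge.mpr fun n => by simpa using le_energyVal (fun _ => 1) n

lemma vval_energyE (m : ℕ) : vval EnergyVal energyE m = m := by
  apply le_antisymm
  · refine sSup_le ?_
    rintro _ ⟨w, ⟨ρ, hρ0, hρ⟩, rfl⟩
    -- the level `ρ k` is the energy left after the first `k` steps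
    have budget : ∀ k, ∑ i ∈ Finset.range k, w i + ρ k ≤ (m : ℤ) := by
      intro k
      induction k with
      | zero => simp [hρ0]
      | succ k ih =>
        have step : w k ≤ (ρ k : ℤ) - ρ (k + 1) := hρ k
        rw [Finset.sum_range_succ]
        omega
    exact energyVal_le_coe_iff.mpr fun k => by have := budget k; omega
  · have hpath : InfPath energyE m (wcat [(m : ℤ)] fun _ => 0) :=
      InfPath.cons (by simp [energyE]) ⟨fun _ => 0, rfl, fun _ => by simp [energyE]⟩
    simpa using (le_energyVal _ 1).trans (le_vval hpath)

lemma vval_completionE_energyE (l : WithTop ℕ) :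
    vval EnergyVal (completionE energyE) l = l := by
  induction l using WithTop.recTopCoe with
  | top =>
    have := le_vval (val := EnergyVal) (infPath_completionE_top (M := energyE) fun _ => 1)
    exact top_le_iff.mp (energyVal_const_one ▸ this)
  | coe m => rw [vval_completionE_coe, vval_energyE]; rfl

lemma completionE_energyE_vval_of_edge {V : Type v} {E : V → ℤ → V → Prop} (hE : NoSinks E)
    {a b : V} {t : ℤ} (hab : E a t b) :
    completionE energyE (vval EnergyVal E a) t (vval EnergyVal E b) := by
  rcases eq_or_ne (vval EnergyVal E a) ⊤ with htop | hne
  · exact Or.inl htop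
  obtain ⟨m, hm⟩ := ENat.ne_top_iff_exists.mp hne
  have budget : ∀ w, InfPath E b w → ∀ k, t + ∑ i ∈ Finset.range k, w i ≤ m :=
    fun w hw => energyVal_cons_le_coe_iff.mp (hm ▸ le_vval (hw.cons hab))
  have htm : t ≤ m := by
    obtain ⟨w, hw⟩ := exists_infPath hE b
    simpa using budget w hw 0
  have hb : vval EnergyVal E b ≤ ((m - t).toNat : ℕ) :=
    sSup_le <| by
      rintro _ ⟨w, hw, rfl⟩
      exact energyVal_le_coe_iff.mpr fun k => by have := budget w hw k; omega
  obtain ⟨n, hn, hnle⟩ := WithTop.le_coe_iff.mp hb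
  refine Or.inr ⟨m, n, hm.symm, hn, ?_⟩
  have hnle' : n ≤ (m - t).toNat := hnle
  show t ≤ (m : ℤ) - n
  omega

lemma universal_completionE_energyE (κ : Cardinal.{u}) :
    Universal EnergyVal κ (completionE energyE) :=
  fun _ _ hE _ => ⟨vval EnergyVal _, fun _ _ _ hab => completionE_energyE_vval_of_edge hE hab,
    fun _ => vval_completionE_energyE _⟩

end Energy

/-- Lemma 6.8.  The energy graph is well-monotonic and its
completion is a completely well-monotonic graph which is uniformly
`Energy`-universal. -/
theorem stmt14 :
    Monotonic energyE ∧ NoSinks energyE ∧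
    WellFounded ((· < ·) : ℕ → ℕ → Prop) ∧
    CWM ℤ (WithTop ℕ) (completionE energyE) ∧
    (∀ κ : Cardinal.{u}, Universal EnergyVal κ (completionE energyE)) :=
  ⟨monotonic_energyE, noSinks_energyE, wellFounded_lt,
    cwm_completionE monotonic_energyE noSinks_energyE, universal_completionE_energyE⟩
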